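/- For every n ≥ 1 and all x, x′ ∈ X, |log(Nₙ(x)/N_{n−1}(x)) − log(Nₙ(x′)/N_{n−1}(x′))| ≤ ρ^{n−1}/(1 − ρ), where ρ = 1 − σ₋/σ₊. (This is inequality (12) of Lemma 3 in explicit finite-dimensional form: the one-step conditional log-densities of the observations computed from two different initial conditions of the hidden chain differ by at most ρ^{n−1}/(1 − ρ), uniformly in the observation functions.) -/

import Mathlib

/-!
Peeling off the first transition, `Nₘ₊₁(x) = ∫ q(x,y) P(y) dμ` and `Nₘ(x) = ∫ q(x,y) Q(y) dμ`
with `P = g₁ N'ₘ` and `Q = g₁ N'ₘ₋₁`, where `N'` is built from the shifted sequence `(g_{k+1})`.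
So the ratio `Nₘ₊₁ / Nₘ` is a `q(x,·)`-weighted average of the ratio `N'ₘ / N'ₘ₋₁`. Because
`σ₋ ≤ q ≤ σ₊`, every such average puts weight at least `σ₋/σ₊` on one and the same
`x`-independent average (Doeblin's minorization), so an interval `[lo, hi]` containing the inner
ratio is mapped into one whose width shrinks by `ρ = 1 - σ₋/σ₊` and whose lower end does not
decrease. Starting from `[σ₋ ∫ g, σ₊ ∫ g]` for `N₁ / N₀`, induction on `m` gives
`hi / lo - 1 ≤ ρᵐ (σ₊ - σ₋)/σ₋ ≤ ρᵐ / (1 - ρ)`, which bounds the difference of logarithms of two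
numbers in `[lo, hi]`.
-/

open MeasureTheory

/-- `Nseq μ q g x n = ∫_{Xⁿ} ∏_{k=1}ⁿ q(x_{k−1}, x_k) g_k(x_k) μ(dx₁)⋯μ(dxₙ)`,
with `x₀ := x` (for `n = 0` this is `1`, the empty product integrated against a
probability measure). The coordinate `xs k` of `xs : Fin n → X` plays the role
of `x_{k+1}`, and `g (k+1)` plays the role of `g_{k+1}`. -/
noncomputable def Nseq {X : Type*} [MeasurableSpace X] (μ : Measure X)
    (q : X → X → ℝ) (g : ℕ → X → ℝ) (x : X) (n : ℕ) : ℝ :=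
  ∫ xs : Fin n → X,
    ∏ k : Fin n,
      q (if (k : ℕ) = 0 then x
         else xs ⟨(k : ℕ) - 1, Nat.lt_of_le_of_lt (Nat.sub_le _ _) k.isLt⟩) (xs k) *
        g ((k : ℕ) + 1) (xs k)
    ∂(Measure.pi fun _ => μ)

section KernelContraction

variable {X : Type*} [MeasurableSpace X] {μ : Measure X} {q : X → X → ℝ} {σm σp : ℝ}
  {f P Q : X → ℝ}

theorem integrable_kernel_mul (hq : Measurable (Function.uncurry q)) (hq0 : ∀ x y, 0 ≤ q x y)
    (hqu : ∀ x y, q x y ≤ σp) (hf : Integrable f μ) (z : X) :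
    Integrable (fun y => q z y * f y) μ :=
  hf.bdd_mul (hq.comp measurable_prodMk_left).aestronglyMeasurable
    (ae_of_all _ fun y => (Real.norm_of_nonneg (hq0 z y)).trans_le (hqu z y))

theorem mul_integral_le_integral_kernel_mul (hq : Measurable (Function.uncurry q))
    (hσm : 0 ≤ σm) (hql : ∀ x y, σm ≤ q x y) (hqu : ∀ x y, q x y ≤ σp)
    (hf : Integrable f μ) (hf0 : ∀ y, 0 ≤ f y) (z : X) :
    σm * ∫ y, f y ∂μ ≤ ∫ y, q z y * f y ∂μ := by
  rw [← integral_const_mul]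
  exact integral_mono (hf.const_mul σm)
    (integrable_kernel_mul hq (fun x y => hσm.trans (hql x y)) hqu hf z)
    fun y => mul_le_mul_of_nonneg_right (hql z y) (hf0 y)

theorem integral_kernel_mul_le_mul_integral (hq : Measurable (Function.uncurry q))
    (hq0 : ∀ x y, 0 ≤ q x y) (hqu : ∀ x y, q x y ≤ σp)
    (hf : Integrable f μ) (hf0 : ∀ y, 0 ≤ f y) (z : X) :
    ∫ y, q z y * f y ∂μ ≤ σp * ∫ y, f y ∂μ := by
  rw [← integral_const_mul]
  exact integral_mono (integrable_kernel_mul hq hq0 hqu hf z) (hf.const_mul σp)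
    fun y => mul_le_mul_of_nonneg_right (hqu z y) (hf0 y)

theorem le_integral_div_integral (hP : Integrable P μ) (hQ : Integrable Q μ)
    (hQpos : 0 < ∫ y, Q y ∂μ) {lo : ℝ} (hlo : ∀ y, lo * Q y ≤ P y) :
    lo ≤ (∫ y, P y ∂μ) / ∫ y, Q y ∂μ := by
  rw [le_div_iff₀ hQpos, ← integral_const_mul]
  exact integral_mono (hQ.const_mul lo) hP hlo

/-- Doeblin minorization: since `q ≥ σm` while `∫ q z · Q ≤ σp ∫ Q`, the `q z ·`-average of
`P / Q` gives weight at least `σm / σp` to the plain average `∫ P / ∫ Q ≥ lo`. -/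
theorem kernel_ratio_lower_bound (hq : Measurable (Function.uncurry q))
    (hσm : 0 ≤ σm) (hσp : 0 < σp) (hql : ∀ x y, σm ≤ q x y) (hqu : ∀ x y, q x y ≤ σp)
    (hP : Integrable P μ) (hQ : Integrable Q μ) (hQ0 : ∀ y, 0 ≤ Q y)
    (hQpos : 0 < ∫ y, Q y ∂μ) {lo : ℝ} (hlo : ∀ y, lo * Q y ≤ P y) (z : X) :
    (lo + σm / σp * ((∫ y, P y ∂μ) / (∫ y, Q y ∂μ) - lo)) * ∫ y, q z y * Q y ∂μ ≤
      ∫ y, q z y * P y ∂μ := by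
  have hq0 : ∀ x y, 0 ≤ q x y := fun x y => hσm.trans (hql x y)
  set r := (∫ y, P y ∂μ) / ∫ y, Q y ∂μ
  have hD : Integrable (fun y => P y - lo * Q y) μ := hP.sub (hQ.const_mul lo)
  have hDint : ∫ y, P y - lo * Q y ∂μ = (r - lo) * ∫ y, Q y ∂μ := by
    rw [integral_sub hP (hQ.const_mul lo), integral_const_mul, sub_mul,
      div_mul_cancel₀ _ hQpos.ne']
  have hDq : ∫ y, q z y * (P y - lo * Q y) ∂μ =
      ∫ y, q z y * P y ∂μ - lo * ∫ y, q z y * Q y ∂μ := by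
    simp only [mul_sub, mul_left_comm (q z _)]
    rw [integral_sub (integrable_kernel_mul hq hq0 hqu hP z)
      ((integrable_kernel_mul hq hq0 hqu hQ z).const_mul lo), integral_const_mul]
  have hrlo : 0 ≤ r - lo := sub_nonneg.2 (le_integral_div_integral hP hQ hQpos hlo)
  have ha := integral_kernel_mul_le_mul_integral hq hq0 hqu hQ hQ0 z
  have hb := mul_integral_le_integral_kernel_mul hq hσm hql hqu hD (fun y => sub_nonneg.2 (hlo y)) z
  rw [hDq, hDint] at hb
  calc (lo + σm / σp * (r - lo)) * ∫ y, q z y * Q y ∂μ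
      ≤ lo * ∫ y, q z y * Q y ∂μ + σm / σp * (r - lo) * (σp * ∫ y, Q y ∂μ) := by
        rw [add_mul]; gcongr
    _ = lo * ∫ y, q z y * Q y ∂μ + σm * ((r - lo) * ∫ y, Q y ∂μ) := by
        field_simp
    _ ≤ ∫ y, q z y * P y ∂μ := by linarith

theorem exists_kernel_ratio_bounds (hq : Measurable (Function.uncurry q))
    (hσm : 0 ≤ σm) (hσp : 0 < σp) (hql : ∀ x y, σm ≤ q x y) (hqu : ∀ x y, q x y ≤ σp)
    (hP : Integrable P μ) (hQ : Integrable Q μ) (hQ0 : ∀ y, 0 ≤ Q y)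
    (hQpos : 0 < ∫ y, Q y ∂μ) {lo hi : ℝ} (hlo : ∀ y, lo * Q y ≤ P y)
    (hhi : ∀ y, P y ≤ hi * Q y) :
    ∃ lo' hi', lo ≤ lo' ∧ hi' - lo' = (1 - σm / σp) * (hi - lo) ∧
      ∀ z, lo' * ∫ y, q z y * Q y ∂μ ≤ ∫ y, q z y * P y ∂μ ∧
        ∫ y, q z y * P y ∂μ ≤ hi' * ∫ y, q z y * Q y ∂μ := by
  set r := (∫ y, P y ∂μ) / ∫ y, Q y ∂μ
  refine ⟨lo + σm / σp * (r - lo), hi - σm / σp * (hi - r), ?_, by ring, fun z =>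
    ⟨kernel_ratio_lower_bound hq hσm hσp hql hqu hP hQ hQ0 hQpos hlo z, ?_⟩⟩
  · have := sub_nonneg.2 (le_integral_div_integral hP hQ hQpos hlo)
    have : 0 ≤ σm / σp := div_nonneg hσm hσp.le
    nlinarith
  · have := kernel_ratio_lower_bound hq hσm hσp hql hqu hP.neg hQ hQ0 hQpos (lo := -hi)
      (fun y => by rw [Pi.neg_apply, neg_mul]; exact neg_le_neg (hhi y)) z
    simp only [Pi.neg_apply, integral_neg, mul_neg, neg_div] at this
    linear_combination this

end KernelContraction

section PathWeight

def pathWeight {X : Type*} (q : X → X → ℝ) (g : ℕ → X → ℝ) (x : X) (n : ℕ) (xs : Fin n → X) : ℝ :=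
  ∏ k : Fin n,
      q (if (k : ℕ) = 0 then x
         else xs ⟨(k : ℕ) - 1, Nat.lt_of_le_of_lt (Nat.sub_le _ _) k.isLt⟩) (xs k) *
        g ((k : ℕ) + 1) (xs k)

variable {X : Type*} {q : X → X → ℝ} {g : ℕ → X → ℝ} {σm σp : ℝ}

theorem pathWeight_cons (x y : X) {n : ℕ} (ys : Fin n → X) :
    pathWeight q g x (n + 1) (Fin.cons y ys) =
      q x y * g 1 y * pathWeight q (fun k => g (k + 1)) y n ys := by
  rw [pathWeight, Fin.prod_univ_succ]
  congr 1
  refine Finset.prod_congr rfl fun j _ => ?_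
  rcases j with ⟨_ | i, hi⟩ <;> rfl

theorem pathWeight_nonneg (hq0 : ∀ x y, 0 ≤ q x y) (hg0 : ∀ k, 1 ≤ k → ∀ y, 0 ≤ g k y)
    (x : X) (n : ℕ) (xs : Fin n → X) : 0 ≤ pathWeight q g x n xs :=
  Finset.prod_nonneg fun k _ => mul_nonneg (hq0 _ _) (hg0 _ (by omega) _)

theorem pathWeight_le (hq0 : ∀ x y, 0 ≤ q x y) (hqu : ∀ x y, q x y ≤ σp)
    (hg0 : ∀ k, 1 ≤ k → ∀ y, 0 ≤ g k y) (x : X) (n : ℕ) (xs : Fin n → X) :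
    pathWeight q g x n xs ≤ σp ^ n * ∏ k : Fin n, g (k + 1) (xs k) := by
  rw [← Fin.prod_const, ← Finset.prod_mul_distrib]
  exact Finset.prod_le_prod (fun k _ => mul_nonneg (hq0 _ _) (hg0 _ (by omega) _))
    fun k _ => mul_le_mul_of_nonneg_right (hqu _ _) (hg0 _ (by omega) _)

theorem le_pathWeight (hσm : 0 ≤ σm) (hql : ∀ x y, σm ≤ q x y)
    (hg0 : ∀ k, 1 ≤ k → ∀ y, 0 ≤ g k y) (x : X) (n : ℕ) (xs : Fin n → X) :
    σm ^ n * ∏ k : Fin n, g (k + 1) (xs k) ≤ pathWeight q g x n xs := by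
  rw [← Fin.prod_const, ← Finset.prod_mul_distrib]
  exact Finset.prod_le_prod (fun k _ => mul_nonneg hσm (hg0 _ (by omega) _))
    fun k _ => mul_le_mul_of_nonneg_right (hql _ _) (hg0 _ (by omega) _)

variable [MeasurableSpace X]

theorem measurable_pathWeight (hq : Measurable (Function.uncurry q))
    (hgm : ∀ k, 1 ≤ k → Measurable (g k)) (x : X) (n : ℕ) :
    Measurable (pathWeight q g x n) := by
  refine Finset.measurable_prod _ fun k _ => ?_
  have hgk : Measurable fun xs : Fin n → X => g (k + 1) (xs k) :=
    (hgm _ (Nat.le_add_left 1 k)).comp (measurable_pi_apply k)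
  by_cases h : (k : ℕ) = 0
  · simp only [if_pos h]
    exact (hq.comp (measurable_const.prodMk (measurable_pi_apply k))).mul hgk
  · simp only [if_neg h]
    exact (hq.comp ((measurable_pi_apply _).prodMk (measurable_pi_apply k))).mul hgk

theorem integrable_pathWeight {μ : Measure X} [SigmaFinite μ]
    (hq : Measurable (Function.uncurry q)) (hq0 : ∀ x y, 0 ≤ q x y) (hqu : ∀ x y, q x y ≤ σp)
    (hgm : ∀ k, 1 ≤ k → Measurable (g k))
    (hg0 : ∀ k, 1 ≤ k → ∀ y, 0 ≤ g k y) (hgi : ∀ k, 1 ≤ k → Integrable (g k) μ) (x : X) (n : ℕ) :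
    Integrable (pathWeight q g x n) (Measure.pi fun _ => μ) := by
  have hbound :=
    (Integrable.fintype_prod fun k : Fin n => hgi (k + 1) (by omega)).const_mul (σp ^ n)
  refine hbound.mono' (measurable_pathWeight hq hgm x n).aestronglyMeasurable
    (ae_of_all _ fun xs => ?_)
  rw [Real.norm_of_nonneg (pathWeight_nonneg hq0 hg0 x n xs)]
  exact pathWeight_le hq0 hqu hg0 x n xs

end PathWeight

section Nseq

variable {X : Type*} [MeasurableSpace X] {μ : Measure X} {q : X → X → ℝ} {g : ℕ → X → ℝ}
  {σm σp : ℝ}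

theorem Nseq_zero (x : X) : Nseq μ q g x 0 = 1 := by
  simp [Nseq, Measure.pi_of_empty fun _ : Fin 0 => μ]

theorem Nseq_succ [SigmaFinite μ] (hq : Measurable (Function.uncurry q))
    (hq0 : ∀ x y, 0 ≤ q x y) (hqu : ∀ x y, q x y ≤ σp) (hgm : ∀ k, 1 ≤ k → Measurable (g k))
    (hg0 : ∀ k, 1 ≤ k → ∀ y, 0 ≤ g k y) (hgi : ∀ k, 1 ≤ k → Integrable (g k) μ) (x : X) (n : ℕ) :
    Nseq μ q g x (n + 1) = ∫ y, q x y * (g 1 y * Nseq μ q (fun k => g (k + 1)) y n) ∂μ := by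
  have e := (measurePreserving_piFinSuccAbove (fun _ : Fin (n + 1) => μ) 0).symm
  have hint := (e.integrable_comp_emb (MeasurableEquiv.measurableEmbedding _)).mpr
    (integrable_pathWeight hq hq0 hqu hgm hg0 hgi x (n + 1))
  change ∫ xs, pathWeight q g x (n + 1) xs ∂_ = _
  rw [← e.integral_comp', integral_prod _ (by simpa only [Function.comp_def] using hint)]
  simp only [MeasurableEquiv.piFinSuccAbove_symm_apply, Fin.insertNthEquiv, Fin.zero_succAbove,
    Fin.insertNth_zero', Fin.removeNth_zero, Equiv.coe_fn_mk, pathWeight_cons, integral_const_mul]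
  exact integral_congr_ae (ae_of_all _ fun y => mul_assoc _ _ _)

theorem Nseq_nonneg (hq0 : ∀ x y, 0 ≤ q x y) (hg0 : ∀ k, 1 ≤ k → ∀ y, 0 ≤ g k y)
    (x : X) (n : ℕ) : 0 ≤ Nseq μ q g x n :=
  integral_nonneg (pathWeight_nonneg hq0 hg0 x n)

theorem Nseq_le [SigmaFinite μ] (hq : Measurable (Function.uncurry q))
    (hq0 : ∀ x y, 0 ≤ q x y) (hqu : ∀ x y, q x y ≤ σp) (hgm : ∀ k, 1 ≤ k → Measurable (g k))
    (hg0 : ∀ k, 1 ≤ k → ∀ y, 0 ≤ g k y) (hgi : ∀ k, 1 ≤ k → Integrable (g k) μ) (x : X) (n : ℕ) :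
    Nseq μ q g x n ≤ σp ^ n * ∏ k : Fin n, ∫ y, g (k + 1) y ∂μ := by
  rw [← integral_fintype_prod_eq_prod, ← integral_const_mul]
  exact integral_mono (integrable_pathWeight hq hq0 hqu hgm hg0 hgi x n)
    ((Integrable.fintype_prod fun k : Fin n => hgi (k + 1) (by omega)).const_mul _)
    (pathWeight_le hq0 hqu hg0 x n)

theorem le_Nseq [SigmaFinite μ] (hq : Measurable (Function.uncurry q))
    (hσm : 0 ≤ σm) (hql : ∀ x y, σm ≤ q x y) (hqu : ∀ x y, q x y ≤ σp)
    (hgm : ∀ k, 1 ≤ k → Measurable (g k)) (hg0 : ∀ k, 1 ≤ k → ∀ y, 0 ≤ g k y)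
    (hgi : ∀ k, 1 ≤ k → Integrable (g k) μ) (x : X) (n : ℕ) :
    σm ^ n * ∏ k : Fin n, ∫ y, g (k + 1) y ∂μ ≤ Nseq μ q g x n := by
  rw [← integral_fintype_prod_eq_prod, ← integral_const_mul]
  exact integral_mono
    ((Integrable.fintype_prod fun k : Fin n => hgi (k + 1) (by omega)).const_mul _)
    (integrable_pathWeight hq (fun x y => hσm.trans (hql x y)) hqu hgm hg0 hgi x n)
    (le_pathWeight hσm hql hg0 x n)

theorem measurable_Nseq [SigmaFinite μ] (hq : Measurable (Function.uncurry q))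
    (hq0 : ∀ x y, 0 ≤ q x y) (hqu : ∀ x y, q x y ≤ σp) (hgm : ∀ k, 1 ≤ k → Measurable (g k))
    (hg0 : ∀ k, 1 ≤ k → ∀ y, 0 ≤ g k y) (hgi : ∀ k, 1 ≤ k → Integrable (g k) μ) (n : ℕ) :
    Measurable fun x => Nseq μ q g x n := by
  induction n generalizing g with
  | zero => simp only [Nseq_zero, measurable_const]
  | succ n ih =>
    have hN := ih (fun k _ => hgm (k + 1) (Nat.le_add_left 1 k))
      (fun k _ => hg0 (k + 1) (Nat.le_add_left 1 k)) (fun k _ => hgi (k + 1) (Nat.le_add_left 1 k))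
    simp only [Nseq_succ hq hq0 hqu hgm hg0 hgi]
    exact StronglyMeasurable.measurable (StronglyMeasurable.integral_prod_right'
      (f := fun p : X × X => q p.1 p.2 * (g 1 p.2 * Nseq μ q (fun k => g (k + 1)) p.2 n))
      (hq.mul (((hgm 1 le_rfl).comp measurable_snd).mul
        (hN.comp measurable_snd))).stronglyMeasurable)

theorem integrable_mul_Nseq [SigmaFinite μ] {f : X → ℝ} (hf : Integrable f μ)
    (hq : Measurable (Function.uncurry q))
    (hq0 : ∀ x y, 0 ≤ q x y) (hqu : ∀ x y, q x y ≤ σp) (hgm : ∀ k, 1 ≤ k → Measurable (g k))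
    (hg0 : ∀ k, 1 ≤ k → ∀ y, 0 ≤ g k y) (hgi : ∀ k, 1 ≤ k → Integrable (g k) μ) (n : ℕ) :
    Integrable (fun y => f y * Nseq μ q g y n) μ :=
  hf.mul_bdd (measurable_Nseq hq hq0 hqu hgm hg0 hgi n).aestronglyMeasurable
    (ae_of_all _ fun y => (Real.norm_of_nonneg (Nseq_nonneg hq0 hg0 y n)).trans_le
      (Nseq_le hq hq0 hqu hgm hg0 hgi y n))

theorem Nseq_pos [SigmaFinite μ] (hq : Measurable (Function.uncurry q))
    (hσm : 0 < σm) (hql : ∀ x y, σm ≤ q x y) (hqu : ∀ x y, q x y ≤ σp)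
    (hgm : ∀ k, 1 ≤ k → Measurable (g k)) (hg0 : ∀ k, 1 ≤ k → ∀ y, 0 ≤ g k y)
    (hgi : ∀ k, 1 ≤ k → Integrable (g k) μ) (hgpos : ∀ k, 1 ≤ k → 0 < ∫ y, g k y ∂μ)
    (x : X) (n : ℕ) : 0 < Nseq μ q g x n :=
  (mul_pos (pow_pos hσm n) (Finset.prod_pos fun k _ => hgpos _ (by omega))).trans_le
    (le_Nseq hq hσm.le hql hqu hgm hg0 hgi x n)

end Nseq

section Forgetting

variable {X : Type*} [MeasurableSpace X] {μ : Measure X} {q : X → X → ℝ} {g : ℕ → X → ℝ}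
  {σm σp : ℝ}

theorem exists_Nseq_succ_ratio_bounds [SigmaFinite μ] (hq : Measurable (Function.uncurry q))
    (hσm : 0 < σm) (hσ : σm ≤ σp) (hql : ∀ x y, σm ≤ q x y) (hqu : ∀ x y, q x y ≤ σp)
    (m : ℕ) (hgm : ∀ k, 1 ≤ k → Measurable (g k)) (hg0 : ∀ k, 1 ≤ k → ∀ y, 0 ≤ g k y)
    (hgi : ∀ k, 1 ≤ k → Integrable (g k) μ) (hgpos : ∀ k, 1 ≤ k → 0 < ∫ y, g k y ∂μ) :
    ∃ lo hi, 0 < lo ∧ hi - lo ≤ (1 - σm / σp) ^ m * ((σp - σm) / σm) * lo ∧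
      ∀ x, lo * Nseq μ q g x m ≤ Nseq μ q g x (m + 1) ∧
        Nseq μ q g x (m + 1) ≤ hi * Nseq μ q g x m := by
  have hσp : 0 < σp := hσm.trans_le hσ
  have hq0 : ∀ x y, 0 ≤ q x y := fun x y => hσm.le.trans (hql x y)
  induction m generalizing g with
  | zero =>
    refine ⟨σm * ∫ y, g 1 y ∂μ, σp * ∫ y, g 1 y ∂μ, mul_pos hσm (hgpos 1 le_rfl),
      le_of_eq (by field_simp), fun x => ?_⟩
    simp only [Nseq_succ hq hq0 hqu hgm hg0 hgi, Nseq_zero, mul_one]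
    exact ⟨mul_integral_le_integral_kernel_mul hq hσm.le hql hqu (hgi 1 le_rfl) (hg0 1 le_rfl) x,
      integral_kernel_mul_le_mul_integral hq hq0 hqu (hgi 1 le_rfl) (hg0 1 le_rfl) x⟩
  | succ m ih =>
    have hgm' : ∀ k, 1 ≤ k → Measurable (g (k + 1)) := fun k _ => hgm _ (Nat.le_add_left 1 k)
    have hg0' : ∀ k, 1 ≤ k → ∀ y, 0 ≤ g (k + 1) y := fun k _ => hg0 _ (Nat.le_add_left 1 k)
    have hgi' : ∀ k, 1 ≤ k → Integrable (g (k + 1)) μ := fun k _ => hgi _ (Nat.le_add_left 1 k)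
    obtain ⟨lo, hi, hlo0, hgap, hN⟩ :=
      ih hgm' hg0' hgi' fun k _ => hgpos _ (Nat.le_add_left 1 k)
    set N := fun (y : X) (n : ℕ) => Nseq μ q (fun k => g (k + 1)) y n
    have hint (n : ℕ) : Integrable (fun y => g 1 y * N y n) μ :=
      integrable_mul_Nseq (hgi 1 le_rfl) hq hq0 hqu hgm' hg0' hgi' n
    have hQpos : 0 < ∫ y, g 1 y * N y m ∂μ := by
      set c := σm ^ m * ∏ k : Fin m, ∫ y, g (k + 1 + 1) y ∂μ
      have hc : 0 < c := mul_pos (pow_pos hσm m) (Finset.prod_pos fun k _ => hgpos _ (by omega))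
      calc 0 < ∫ y, g 1 y * c ∂μ := by
            rw [integral_mul_const]; exact mul_pos (hgpos 1 le_rfl) hc
        _ ≤ ∫ y, g 1 y * N y m ∂μ :=
            integral_mono ((hgi 1 le_rfl).mul_const c) (hint m) fun y =>
              mul_le_mul_of_nonneg_left (le_Nseq hq hσm.le hql hqu hgm' hg0' hgi' y m)
                (hg0 1 le_rfl y)
    obtain ⟨lo', hi', hlo', hgap', hbounds⟩ := exists_kernel_ratio_bounds hq hσm.le hσp hql hqu
      (hint (m + 1)) (hint m) (fun y => mul_nonneg (hg0 1 le_rfl y) (Nseq_nonneg hq0 hg0' y m))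
      hQpos (lo := lo) (hi := hi)
      (fun y => by rw [mul_left_comm]; exact mul_le_mul_of_nonneg_left (hN y).1 (hg0 1 le_rfl y))
      (fun y => by rw [mul_left_comm]; exact mul_le_mul_of_nonneg_left (hN y).2 (hg0 1 le_rfl y))
    refine ⟨lo', hi', hlo0.trans_le hlo', ?_, fun x => ?_⟩
    · have hρ : 0 ≤ 1 - σm / σp := sub_nonneg.2 ((div_le_one hσp).2 hσ)
      have hκ : 0 ≤ (σp - σm) / σm := div_nonneg (sub_nonneg.2 hσ) hσm.le
      calc hi' - lo' = (1 - σm / σp) * (hi - lo) := hgap'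
        _ ≤ (1 - σm / σp) * ((1 - σm / σp) ^ m * ((σp - σm) / σm) * lo') := by
            gcongr; exact hgap.trans (by gcongr)
        _ = (1 - σm / σp) ^ (m + 1) * ((σp - σm) / σm) * lo' := by ring
    · simp only [Nseq_succ hq hq0 hqu hgm hg0 hgi]
      exact hbounds x

end Forgetting

theorem abs_log_sub_log_le_of_mem_Icc {a b lo hi : ℝ} (hlo : 0 < lo) (ha : a ∈ Set.Icc lo hi)
    (hb : b ∈ Set.Icc lo hi) : |Real.log a - Real.log b| ≤ hi / lo - 1 := by
  have key {a b : ℝ} (ha : a ∈ Set.Icc lo hi) (hb : b ∈ Set.Icc lo hi) :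
      Real.log a - Real.log b ≤ hi / lo - 1 := by
    have hb0 : 0 < b := hlo.trans_le hb.1
    rw [← Real.log_div (hlo.trans_le ha.1).ne' hb0.ne']
    calc Real.log (a / b) ≤ a / b - 1 :=
          Real.log_le_sub_one_of_pos (div_pos (hlo.trans_le ha.1) hb0)
      _ ≤ hi / lo - 1 :=
          sub_le_sub_right (div_le_div₀ (hlo.le.trans (ha.1.trans ha.2)) ha.2 hlo hb.1) 1
  exact abs_sub_le_iff.2 ⟨key ha hb, key hb ha⟩

/-- inequality (12) of Lemma 3, explicit form. For every
`n ≥ 1` and all initial points `x, x′`, the one-step conditional log-densities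
differ by at most `ρ^{n−1}/(1 − ρ)`, where `ρ = 1 − σ₋/σ₊`. -/
theorem one_step_log_density_forgetting
    {X : Type*} [MeasurableSpace X] (μ : Measure X) [IsProbabilityMeasure μ]
    (σm σp : ℝ) (hσm : 0 < σm) (hσ : σm ≤ σp)
    (q : X → X → ℝ) (hq : Measurable (Function.uncurry q))
    (hql : ∀ x x', σm ≤ q x x') (hqu : ∀ x x', q x x' ≤ σp)
    (g : ℕ → X → ℝ) (hgm : ∀ k, 1 ≤ k → Measurable (g k))
    (hg0 : ∀ k, 1 ≤ k → ∀ x, 0 ≤ g k x)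
    (hgi : ∀ k, 1 ≤ k → Integrable (g k) μ)
    (hgpos : ∀ k, 1 ≤ k → 0 < ∫ x, g k x ∂μ)
    (n : ℕ) (hn : 1 ≤ n) (x x' : X) :
    |Real.log (Nseq μ q g x n / Nseq μ q g x (n - 1)) -
        Real.log (Nseq μ q g x' n / Nseq μ q g x' (n - 1))| ≤
      (1 - σm / σp) ^ (n - 1) / (1 - (1 - σm / σp)) := by
  obtain ⟨m, rfl⟩ : ∃ m, n = m + 1 := ⟨n - 1, by omega⟩
  obtain ⟨lo, hi, hlo, hgap, hN⟩ :=
    exists_Nseq_succ_ratio_bounds hq hσm hσ hql hqu m hgm hg0 hgi hgpos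
  have hratio (z : X) : Nseq μ q g z (m + 1) / Nseq μ q g z m ∈ Set.Icc lo hi := by
    have hpos := Nseq_pos hq hσm hql hqu hgm hg0 hgi hgpos z m
    exact ⟨(le_div_iff₀ hpos).2 (hN z).1, (div_le_iff₀ hpos).2 (hN z).2⟩
  have hσp : 0 < σp := hσm.trans_le hσ
  rw [Nat.add_sub_cancel]
  calc _ ≤ hi / lo - 1 := abs_log_sub_log_le_of_mem_Icc hlo (hratio x) (hratio x')
    _ ≤ (1 - σm / σp) ^ m * ((σp - σm) / σm) := by
        rw [div_sub_one hlo.ne', div_le_iff₀ hlo]; exact hgap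
    _ ≤ (1 - σm / σp) ^ m / (1 - (1 - σm / σp)) := by
        rw [sub_sub_cancel, div_div_eq_mul_div, mul_div_assoc]
        exact mul_le_mul_of_nonneg_left (div_le_div_of_nonneg_right (by linarith) hσm.le)
          (pow_nonneg (sub_nonneg.2 ((div_le_one hσp).2 hσ)) m)
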